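/- arXiv:0905.0409 — 7 statements merged into one kernel-verified Lean document; each statement's English description precedes it below -/
import Mathlib

section
/- Let G be a finite abelian group that can be generated by two elements, and let P₁, P₂, P₃ ∈ G. Then there exists a 3×3 integer matrix M with trace zero such that for each i ∈ {1,2,3} one has Pᵢ = Mᵢ₁·P₁ + Mᵢ₂·P₂ + Mᵢ₃·P₃ (where n·P denotes the n-fold sum of P in G). -/
/-!
Lift the `Pᵢ` along the surjection `ℤ² → G`. Three vectors in `ℤ²` satisfy a nontrivial integer
relation, and dividing by the gcd of its coefficients makes it primitive: `∑ cᵢ Pᵢ = 0` with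
`∑ cᵢ aᵢ = 1` by Bézout. Then `M = 1 - 3 a cᵀ` has trace `3 - 3 = 0` and fixes `P`, since
`M P = P - 3 a (∑ cⱼ Pⱼ)`.
-/

open Finset Submodule

section

variable {ι : Type*} [Fintype ι]

theorem exists_primitive_relation_of_card_lt {κ : Type*} [Fintype κ] (v : ι → κ → ℤ)
    (hcard : Fintype.card κ < Fintype.card ι) :
    ∃ c a : ι → ℤ, ∑ i, c i • v i = 0 ∧ ∑ i, c i * a i = 1 := by
  have hdep : ¬LinearIndependent ℤ v := fun hli =>
    (hli.fintype_card_le_finrank.trans_eq (Module.finrank_fintype_fun_eq_card ℤ)).not_gt hcard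
  obtain ⟨r, hr, i₀, hi₀⟩ := Fintype.not_linearIndependent_iff.mp hdep
  obtain ⟨c, hrc, hc⟩ := univ.extract_gcd r ⟨i₀, mem_univ _⟩
  have hgcd : univ.gcd r ≠ 0 := fun h => hi₀ (by rw [hrc i₀ (mem_univ _), h, zero_mul])
  have hrel : univ.gcd r • ∑ i, c i • v i = 0 := by
    rw [← hr, smul_sum]
    exact sum_congr rfl fun i hi => by rw [smul_smul, ← hrc i hi]
  obtain ⟨a, ha⟩ := univ.gcd_eq_sum_mul c
  exact ⟨c, a, (smul_eq_zero.mp hrel).resolve_left hgcd, ha ▸ hc⟩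

variable {G : Type*} [AddCommGroup G]

theorem exists_primitive_relation_of_span_eq_top {κ : Type*} [Fintype κ] {g : κ → G}
    (hg : span ℤ (Set.range g) = ⊤) (hcard : Fintype.card κ < Fintype.card ι) (P : ι → G) :
    ∃ c a : ι → ℤ, ∑ i, c i • P i = 0 ∧ ∑ i, c i * a i = 1 := by
  have hsurj := Fintype.range_linearCombination ℤ g ▸ hg
  choose v hv using fun i => (LinearMap.range_eq_top.mp hsurj) (P i)
  obtain ⟨c, a, hrel, hprim⟩ := exists_primitive_relation_of_card_lt v hcard
  refine ⟨c, a, ?_, hprim⟩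
  simp_rw [← hv, ← map_smul, ← map_sum, hrel, map_zero]

theorem exists_trace_eq_zero_of_primitive_relation (P : ι → G) {c a : ι → ℤ}
    (hrel : ∑ i, c i • P i = 0) (hprim : ∑ i, c i * a i = 1) :
    ∃ M : Matrix ι ι ℤ, M.trace = 0 ∧ ∀ i, P i = ∑ j, M i j • P j := by
  classical
  refine ⟨1 - Matrix.vecMulVec ((Fintype.card ι : ℤ) • a) c, ?_, fun i => ?_⟩
  · rw [Matrix.trace_sub, Matrix.trace_one, Matrix.trace_vecMulVec, smul_dotProduct,
      dotProduct_comm, dotProduct, hprim, smul_eq_mul, mul_one, sub_self]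
  · simp_rw [Matrix.sub_apply, Matrix.vecMulVec_apply, sub_smul, sum_sub_distrib, mul_smul,
      ← smul_sum, hrel, smul_zero, sub_zero, Matrix.one_apply, ite_smul, one_smul, zero_smul,
      sum_ite_eq, mem_univ, if_true]

theorem span_range_pair_eq_top {g h : G} (hgen : ∀ x : G, ∃ a b : ℤ, x = a • g + b • h) :
    span ℤ (Set.range ![g, h]) = ⊤ := by
  refine eq_top_iff'.mpr fun x => ?_
  obtain ⟨a, b, rfl⟩ := hgen x
  have hg : g ∈ span ℤ (Set.range ![g, h]) := subset_span ⟨0, rfl⟩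
  have hh : h ∈ span ℤ (Set.range ![g, h]) := subset_span ⟨1, rfl⟩
  exact add_mem (smul_mem _ a hg) (smul_mem _ b hh)

end

theorem stmt_0_general (G : Type*) [AddCommGroup G]
    (hgen : ∃ g h : G, ∀ x : G, ∃ a b : ℤ, x = a • g + b • h)
    (P : Fin 3 → G) :
    ∃ M : Matrix (Fin 3) (Fin 3) ℤ, Matrix.trace M = 0 ∧
      ∀ i : Fin 3, P i = ∑ j : Fin 3, M i j • P j := by
  obtain ⟨g, h, hgh⟩ := hgen
  obtain ⟨c, a, hrel, hprim⟩ := exists_primitive_relation_of_span_eq_top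
    (span_range_pair_eq_top hgh) (by simp) P
  exact exists_trace_eq_zero_of_primitive_relation P hrel hprim

/-- If `G` is a finite abelian group generated by two elements and
`P : Fin 3 → G`, then there is a trace-zero integer matrix `M` with
`P i = ∑ j, M i j • P j` for all `i`. -/
theorem stmt_0 (G : Type*) [AddCommGroup G] [Fintype G]
    (hgen : ∃ g h : G, ∀ x : G, ∃ a b : ℤ, x = a • g + b • h)
    (P : Fin 3 → G) :
    ∃ M : Matrix (Fin 3) (Fin 3) ℤ, Matrix.trace M = 0 ∧
      ∀ i : Fin 3, P i = ∑ j : Fin 3, M i j • P j :=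
  stmt_0_general G hgen P
end

section
/- Let G be a finite abelian group such that for every prime number ℓ the ℓ-torsion subgroup G[ℓ] = {g ∈ G : ℓ·g = 0} can be generated by two elements, and let P₁, P₂, P₃ ∈ G. Then there exists a 3×3 integer matrix M with trace zero such that for each i ∈ {1,2,3} one has Pᵢ = Mᵢ₁·P₁ + Mᵢ₂·P₂ + Mᵢ₃·P₃. -/
/-!
Let `R ⊆ ℤ^ι` be the lattice of relations `∑ aᵢ • Pᵢ = 0`. A matrix `1 + N` whose rows `Nᵢ` lie
in `R` sends `P` to `P`, so it suffices to find such an `N` of trace `-|ι|`. The traces of these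
`N` form the ideal of `ℤ` generated by the coordinates of relations, which is all of `ℤ` unless
`R ⊆ pℤ^ι` for some prime `p`. In that case the subgroup `A` spanned by the `Pᵢ` would have
`|A[p]| = |A / pA| ≥ p^|ι|`, contradicting `|G[p]| ≤ p² < p³`.
-/

lemma zmod_val_zsmul_of_nsmul_eq_zero {G : Type*} [AddGroup G] {p : ℕ} [NeZero p] {g : G}
    (hg : p • g = 0) (a : ℤ) : ((a : ZMod p).val : ℤ) • g = a • g := by
  rw [zsmul_eq_zsmul_iff_modEq, ZMod.val_intCast]
  exact (Int.mod_modEq a p).of_dvd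
    (Int.natCast_dvd_natCast.mpr (addOrderOf_dvd_of_nsmul_eq_zero hg))

lemma card_nsmul_eq_zero_le_sq {G : Type*} [AddCommGroup G] {p : ℕ} [NeZero p] {g h : G}
    (hg : p • g = 0) (hh : p • h = 0)
    (hgen : ∀ x : G, p • x = 0 → ∃ a b : ℤ, x = a • g + b • h) :
    Nat.card {x : G // p • x = 0} ≤ p ^ 2 := by
  let ψ : ZMod p × ZMod p → G := fun c => ((c.1.val : ℤ) • g + (c.2.val : ℤ) • h)
  have hsub : {x : G | p • x = 0} ⊆ Set.range ψ := by
    intro x hx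
    obtain ⟨a, b, rfl⟩ := hgen x hx
    exact ⟨(a, b), by simp only [ψ, zmod_val_zsmul_of_nsmul_eq_zero hg,
      zmod_val_zsmul_of_nsmul_eq_zero hh]⟩
  calc Nat.card {x : G // p • x = 0} ≤ Nat.card (Set.range ψ) :=
        Nat.card_mono (Set.finite_range ψ) hsub
    _ ≤ Nat.card (ZMod p × ZMod p) := Finite.card_range_le ψ
    _ = p ^ 2 := by simp [sq]

lemma pow_card_le_card_nsmul_eq_zero {ι A : Type*} [Fintype ι] [AddCommGroup A] [Finite A]
    {p : ℕ} [NeZero p] (φ : (ι → ℤ) →ₗ[ℤ] A) (hφ : Function.Surjective φ)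
    (hker : ∀ a, φ a = 0 → ∀ i, (p : ℤ) ∣ a i) :
    p ^ Fintype.card ι ≤ Nat.card {x : A // p • x = 0} := by
  let f : A →+ A := nsmulAddMonoidHom p
  -- `p^|ι| · |pA| ≤ |A| = |A[p]| · |pA|`, the first inequality because every relation is
  -- divisible by `p`.
  have hinj : Function.Injective
      (fun cy : (ι → ZMod p) × f.range => φ (fun i => (cy.1 i).val) + cy.2) := by
    rintro ⟨c, y, z, rfl⟩ ⟨c', y', z', rfl⟩ heq
    obtain ⟨e, rfl⟩ := hφ z
    obtain ⟨e', rfl⟩ := hφ z'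
    simp only [f, nsmulAddMonoidHom_apply] at heq
    have hc : c = c' := by
      funext i
      have hrel := hker ((fun i => ((c i).val : ℤ)) - (fun i => ((c' i).val : ℤ)) + p • (e - e'))
        (by rw [map_add, map_sub, map_nsmul, map_sub, smul_sub, ← sub_eq_zero.mpr heq]; abel) i
      simp only [Pi.add_apply, Pi.sub_apply, Pi.smul_apply] at hrel
      rw [nsmul_eq_mul, dvd_add_left (dvd_mul_right _ _)] at hrel
      simpa using ((ZMod.intCast_eq_intCast_iff_dvd_sub _ _ p).mpr hrel).symm
    subst hc
    exact Prod.ext rfl (Subtype.ext (add_left_cancel heq))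
  have hcard := Nat.card_le_card_of_injective _ hinj
  rw [Nat.card_prod, Nat.card_fun, Nat.card_zmod, Nat.card_eq_fintype_card (α := ι),
    ← f.ker.card_mul_index, AddSubgroup.index_ker] at hcard
  exact (Nat.le_of_mul_le_mul_right hcard Nat.card_pos).trans_eq
    (Nat.card_congr (Equiv.subtypeEquivRight fun x => by simp [f]))

lemma exists_mem_ker_linearCombination_not_dvd {ι G : Type*} [Fintype ι] [AddCommGroup G]
    [Finite G] {p : ℕ} [NeZero p] (hG : Nat.card {x : G // p • x = 0} < p ^ Fintype.card ι)
    (P : ι → G) :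
    ∃ a ∈ LinearMap.ker (Fintype.linearCombination ℤ P), ∃ i, ¬ (p : ℤ) ∣ a i := by
  by_contra! hdvd
  let φ := Fintype.linearCombination ℤ P
  have hφ : ∀ a, φ.rangeRestrict a = 0 → ∀ i, (p : ℤ) ∣ a i := fun a ha =>
    hdvd a (by rw [← LinearMap.ker_rangeRestrict]; exact ha)
  have hincl : Nat.card {x : φ.range // p • x = 0} ≤ Nat.card {x : G // p • x = 0} :=
    Nat.card_le_card_of_injective (fun x => ⟨x.1, congrArg Subtype.val x.2⟩)
      fun x y hxy => by ext; simpa using hxy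
  exact (pow_card_le_card_nsmul_eq_zero _ φ.surjective_rangeRestrict hφ).trans hincl |>.not_gt hG

lemma Matrix.exists_rows_mem_trace_eq {ι R : Type*} [Fintype ι] [DecidableEq ι] [Semiring R]
    {S : Submodule R (ι → R)} {t : R} (ht : t ∈ ⨆ i, S.map (LinearMap.proj i)) :
    ∃ N : Matrix ι ι R, (∀ i, N i ∈ S) ∧ N.trace = t := by
  refine Submodule.iSup_induction _ (motive := fun t => ∃ N : Matrix ι ι R, (∀ i, N i ∈ S) ∧
    N.trace = t) ht (fun i t ht => ?_) ⟨0, fun _ => S.zero_mem, by simp⟩ ?_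
  · obtain ⟨r, hr, rfl⟩ := ht
    refine ⟨Pi.single i r, fun j => ?_,
      by simp [Matrix.trace, Matrix.diag, Pi.single_apply, ite_apply]⟩
    rcases eq_or_ne j i with rfl | hj
    · simpa using hr
    · simp [hj]
  · rintro _ _ ⟨N, hN, rfl⟩ ⟨N', hN', rfl⟩
    exact ⟨N + N', fun i => S.add_mem (hN i) (hN' i), Matrix.trace_add N N'⟩

lemma Int.ideal_eq_top_of_forall_prime {I : Ideal ℤ}
    (hI : ∀ p : ℕ, p.Prime → ∃ t ∈ I, ¬ (p : ℤ) ∣ t) : I = ⊤ := by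
  obtain ⟨k, rfl⟩ := (IsPrincipalIdealRing.principal I).principal
  rw [Ideal.span_singleton_eq_top, Int.isUnit_iff_natAbs_eq]
  by_contra hk
  obtain ⟨p, hp, hpk⟩ := Nat.exists_prime_and_dvd hk
  obtain ⟨t, ht, hpt⟩ := hI p hp
  exact hpt ((Int.natCast_dvd.mpr hpk).trans (Ideal.mem_span_singleton.mp ht))

theorem exists_trace_eq_zero_forall_eq_sum_smul {ι G : Type*} [Fintype ι] [DecidableEq ι]
    [AddCommGroup G] [Finite G]
    (hG : ∀ p : ℕ, p.Prime → Nat.card {x : G // p • x = 0} < p ^ Fintype.card ι) (P : ι → G) :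
    ∃ M : Matrix ι ι ℤ, M.trace = 0 ∧ ∀ i, P i = ∑ j, M i j • P j := by
  set S := LinearMap.ker (Fintype.linearCombination ℤ P)
  have htop : ⨆ i, S.map (LinearMap.proj i) = ⊤ := Int.ideal_eq_top_of_forall_prime fun p hp => by
    have : NeZero p := ⟨hp.ne_zero⟩
    obtain ⟨a, ha, i, hi⟩ := exists_mem_ker_linearCombination_not_dvd (hG p hp) P
    exact ⟨a i, Submodule.mem_iSup_of_mem i (Submodule.mem_map_of_mem ha), hi⟩
  obtain ⟨N, hN, htr⟩ := Matrix.exists_rows_mem_trace_eq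
    (htop ▸ Submodule.mem_top : -(Fintype.card ι : ℤ) ∈ ⨆ i, S.map (LinearMap.proj i))
  refine ⟨1 + N, by simp [Matrix.trace_add, htr], fun i => ?_⟩
  have hrow : ∑ j, N i j • P j = 0 := hN i
  simp [Matrix.add_apply, add_smul, Finset.sum_add_distrib, Matrix.one_apply, hrow]

/-- If `G` is a finite abelian group such that for every prime `ℓ` the
`ℓ`-torsion subgroup is generated by two elements, and `P : Fin 3 → G`, then there is a
trace-zero integer matrix `M` with `P i = ∑ j, M i j • P j` for all `i`. -/
theorem stmt_1 (G : Type*) [AddCommGroup G] [Fintype G]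
    (htors : ∀ ℓ : ℕ, ℓ.Prime →
      ∃ g h : G, ℓ • g = 0 ∧ ℓ • h = 0 ∧
        ∀ x : G, ℓ • x = 0 → ∃ a b : ℤ, x = a • g + b • h)
    (P : Fin 3 → G) :
    ∃ M : Matrix (Fin 3) (Fin 3) ℤ, Matrix.trace M = 0 ∧
      ∀ i : Fin 3, P i = ∑ j : Fin 3, M i j • P j := by
  refine exists_trace_eq_zero_forall_eq_sum_smul (fun p hp => ?_) P
  have : NeZero p := ⟨hp.ne_zero⟩
  obtain ⟨g, h, hg, hh, hgen⟩ := htors p hp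
  calc Nat.card {x : G // p • x = 0} ≤ p ^ 2 := card_nsmul_eq_zero_le_sq hg hh hgen
    _ < p ^ Fintype.card (Fin 3) := by simpa using Nat.pow_lt_pow_right hp.one_lt (by norm_num)
end

section
/- Let G be a finite abelian group such that for every prime number ℓ the ℓ-torsion subgroup G[ℓ] = {g ∈ G : ℓ·g = 0} can be generated by two elements, and let P₁, P₂, P₃ ∈ G. Let α₁ be the smallest positive integer such that α₁·P₁ lies in the subgroup of G generated by P₂ and P₃, and define α₂ and α₃ analogously (these exist since G is finite). Then gcd(α₁, α₂, α₃) = 1. -/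
/-!
Suppose a prime `ℓ` divided all three `αᵢ` and let `H = ⟨P₁, P₂, P₃⟩`. A relation
`a₁ P₁ + a₂ P₂ + a₃ P₃ = ℓ (u₁ P₁ + u₂ P₂ + u₃ P₃)` gives `(a₁ - ℓ u₁) P₁ ∈ ⟨P₂, P₃⟩`, so
`ℓ ∣ α₁ ∣ a₁ - ℓ u₁` and hence `ℓ ∣ a₁`; likewise for `a₂, a₃`. Thus `ℤ³ → H/ℓH` has kernel `ℓℤ³`
and `|H/ℓH| = ℓ³`. On the other hand, for the finite group `H` multiplication by `ℓ` has
`|H/ℓH| = |H[ℓ]| ≤ |G[ℓ]|`, and `G[ℓ]`, being generated by two elements of order dividing `ℓ`,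
has at most `ℓ²` elements.
-/

open AddSubgroup

section MinimalMultiplier

variable {G : Type*} [AddCommGroup G] {P : G} {C : AddSubgroup G} {α : ℕ}

theorem eq_addOrderOf_mk_of_isLeast (hα : IsLeast {n : ℕ | 0 < n ∧ n • P ∈ C} α) :
    α = addOrderOf (P : G ⧸ C) := by
  obtain ⟨⟨hpos, hmem⟩, hmin⟩ := hα
  have hzero : α • (P : G ⧸ C) = 0 := (QuotientAddGroup.eq_zero_iff _).2 hmem
  have hfin : 0 < addOrderOf (P : G ⧸ C) :=
    (isOfFinAddOrder_iff_nsmul_eq_zero.2 ⟨α, hpos, hzero⟩).addOrderOf_pos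
  refine le_antisymm (hmin ⟨hfin, ?_⟩) (addOrderOf_le_of_nsmul_eq_zero hpos hzero)
  rw [← QuotientAddGroup.eq_zero_iff, QuotientAddGroup.mk_nsmul]
  exact addOrderOf_nsmul_eq_zero _

theorem natCast_dvd_of_isLeast_of_zsmul_mem (hα : IsLeast {n : ℕ | 0 < n ∧ n • P ∈ C} α)
    {m : ℤ} (hm : m • P ∈ C) : (α : ℤ) ∣ m := by
  rw [eq_addOrderOf_mk_of_isLeast hα, addOrderOf_dvd_iff_zsmul_eq_zero]
  exact (QuotientAddGroup.eq_zero_iff _).2 hm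

theorem dvd_of_combination_eq_nsmul {Q R : G}
    (hα : IsLeast {n : ℕ | 0 < n ∧ n • P ∈ closure ({Q, R} : Set G)} α) {ℓ : ℕ} (hℓ : ℓ ∣ α)
    {a b c u v w : ℤ} (h : a • P + b • Q + c • R = ℓ • (u • P + v • Q + w • R)) :
    (ℓ : ℤ) ∣ a := by
  have hP : (a - ℓ * u) • P = (ℓ * v - b) • Q + (ℓ * w - c) • R := by
    linear_combination (norm := module) h
  have hdvd := natCast_dvd_of_isLeast_of_zsmul_mem hα (m := a - ℓ * u)
    (by rw [hP]; exact mem_closure_pair.2 ⟨_, _, rfl⟩)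
  exact (dvd_sub_left (dvd_mul_right _ _)).1 ((Int.natCast_dvd_natCast.2 hℓ).trans hdvd)

end MinimalMultiplier

section IndexBounds

variable {M A : Type*} [AddCommGroup M] [Module.Free ℤ M] [Module.Finite ℤ M] [AddCommGroup A]

theorem AddMonoidHom.card_range_le_of_nsmul_eq_zero (ψ : M →+ A) {n : ℕ} (hn : n ≠ 0)
    (h : ∀ x, n • ψ x = 0) : Nat.card ψ.range ≤ n ^ Module.finrank ℤ M := by
  have hle : (nsmulAddMonoidHom n : M →+ M).range ≤ ψ.ker := by
    rintro _ ⟨x, rfl⟩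
    simp [h]
  have : (nsmulAddMonoidHom n : M →+ M).range.FiniteIndex :=
    ⟨by rw [index_range_nsmul]; positivity⟩
  rw [← index_ker]
  exact (index_antitone hle).trans_eq (index_range_nsmul M n)

theorem AddSubgroup.pow_finrank_le_index_of_comap_le {ψ : M →+ A} (hψ : Function.Surjective ψ)
    {K : AddSubgroup A} [K.FiniteIndex] {n : ℕ}
    (hK : K.comap ψ ≤ (nsmulAddMonoidHom n : M →+ M).range) :
    n ^ Module.finrank ℤ M ≤ K.index := by
  have : (K.comap ψ).FiniteIndex :=
    ⟨by rw [index_comap_of_surjective K hψ]; exact FiniteIndex.index_ne_zero⟩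
  rw [← index_range_nsmul M n, ← index_comap_of_surjective K hψ]
  exact index_antitone hK

end IndexBounds

theorem AddSubgroup.card_ker_nsmul_le {G : Type*} [AddCommGroup G] [Finite G]
    (H : AddSubgroup G) (n : ℕ) :
    Nat.card (nsmulAddMonoidHom n : H →+ H).ker ≤ Nat.card (nsmulAddMonoidHom n : G →+ G).ker :=
  Nat.card_le_card_of_injective (fun x => ⟨x.1, by simpa using congrArg Subtype.val x.2⟩)
    fun _ _ hxy => Subtype.ext (Subtype.ext (congrArg Subtype.val hxy :))

theorem comap_rangeRestrict_range_nsmul_le {G : Type*} [AddCommGroup G] {P₁ P₂ P₃ : G}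
    {α₁ α₂ α₃ ℓ : ℕ}
    (hα₁ : IsLeast {n : ℕ | 0 < n ∧ n • P₁ ∈ closure ({P₂, P₃} : Set G)} α₁)
    (hα₂ : IsLeast {n : ℕ | 0 < n ∧ n • P₂ ∈ closure ({P₁, P₃} : Set G)} α₂)
    (hα₃ : IsLeast {n : ℕ | 0 < n ∧ n • P₃ ∈ closure ({P₁, P₂} : Set G)} α₃)
    (h₁ : ℓ ∣ α₁) (h₂ : ℓ ∣ α₂) (h₃ : ℓ ∣ α₃) (ψ : ℤ × ℤ × ℤ →+ G)
    (hψ : ∀ x, ψ x = x.1 • P₁ + x.2.1 • P₂ + x.2.2 • P₃) :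
    (nsmulAddMonoidHom ℓ : ψ.range →+ ψ.range).range.comap ψ.rangeRestrict ≤
      (nsmulAddMonoidHom ℓ).range := by
  rintro ⟨a, b, c⟩ ⟨z, hz⟩
  obtain ⟨⟨u, v, w⟩, rfl⟩ := ψ.rangeRestrict_surjective z
  have h : a • P₁ + b • P₂ + c • P₃ = ℓ • (u • P₁ + v • P₂ + w • P₃) := by
    simpa [hψ] using (congrArg Subtype.val hz).symm
  obtain ⟨a', rfl⟩ := dvd_of_combination_eq_nsmul hα₁ h₁ h
  obtain ⟨b', rfl⟩ := dvd_of_combination_eq_nsmul hα₂ h₂ (a := b) (b := ℓ * a') (c := c)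
    (u := v) (v := u) (w := w) (by linear_combination (norm := module) h)
  obtain ⟨c', rfl⟩ := dvd_of_combination_eq_nsmul hα₃ h₃ (a := c) (b := ℓ * a') (c := ℓ * b')
    (u := w) (v := u) (w := v) (by linear_combination (norm := module) h)
  exact ⟨(a', b', c'), by simp⟩

/-- If every `ℓ`-torsion subgroup of the finite abelian group `G` is generated
by two elements, and `α₁, α₂, α₃` are the minimal positive multipliers sending each `Pᵢ` into
the subgroup generated by the other two points, then `gcd(α₁, α₂, α₃) = 1`. -/
theorem stmt_2 (G : Type*) [AddCommGroup G] [Fintype G]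
    (htors : ∀ ℓ : ℕ, ℓ.Prime →
      ∃ g h : G, ℓ • g = 0 ∧ ℓ • h = 0 ∧
        ∀ x : G, ℓ • x = 0 → ∃ a b : ℤ, x = a • g + b • h)
    (P₁ P₂ P₃ : G) (α₁ α₂ α₃ : ℕ)
    (hα₁ : IsLeast {n : ℕ | 0 < n ∧ n • P₁ ∈ AddSubgroup.closure ({P₂, P₃} : Set G)} α₁)
    (hα₂ : IsLeast {n : ℕ | 0 < n ∧ n • P₂ ∈ AddSubgroup.closure ({P₁, P₃} : Set G)} α₂)
    (hα₃ : IsLeast {n : ℕ | 0 < n ∧ n • P₃ ∈ AddSubgroup.closure ({P₁, P₂} : Set G)} α₃) :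
    Nat.gcd α₁ (Nat.gcd α₂ α₃) = 1 := by
  by_contra hne
  obtain ⟨ℓ, hℓ, hdvd⟩ := Nat.exists_prime_and_dvd hne
  obtain ⟨h₁, h₂, h₃⟩ : ℓ ∣ α₁ ∧ ℓ ∣ α₂ ∧ ℓ ∣ α₃ := by simpa [Nat.dvd_gcd_iff] using hdvd
  let ψ : ℤ × ℤ × ℤ →+ G :=
    (zmultiplesHom G P₁).coprod ((zmultiplesHom G P₂).coprod (zmultiplesHom G P₃))
  have hlower : ℓ ^ 3 ≤ Nat.card (nsmulAddMonoidHom ℓ : ψ.range →+ ψ.range).ker := by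
    rw [← index_range]
    simpa using pow_finrank_le_index_of_comap_le ψ.rangeRestrict_surjective
      (comap_rangeRestrict_range_nsmul_le hα₁ hα₂ hα₃ h₁ h₂ h₃ ψ fun _ => (add_assoc _ _ _).symm)
  obtain ⟨g, h, hg, hh, hgh⟩ := htors ℓ hℓ
  let φ : ℤ × ℤ →+ G := (zmultiplesHom G g).coprod (zmultiplesHom G h)
  have hupper : Nat.card (nsmulAddMonoidHom ℓ : G →+ G).ker ≤ ℓ ^ 2 := by
    have hker : (nsmulAddMonoidHom ℓ : G →+ G).ker ≤ φ.range := fun x hx => by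
      obtain ⟨a, b, rfl⟩ := hgh x hx
      exact ⟨(a, b), rfl⟩
    refine (card_le_of_le hker).trans ?_
    simpa using φ.card_range_le_of_nsmul_eq_zero hℓ.ne_zero fun x => by
      simp [φ, smul_comm ℓ, hg, hh]
  have := (hlower.trans (card_ker_nsmul_le ψ.range ℓ)).trans hupper
  exact absurd this (not_le.2 (Nat.pow_lt_pow_right hℓ.one_lt (by norm_num)))
end

section
/- Let ℓ be a prime number and let G be a finite abelian group whose ℓ-torsion subgroup G[ℓ] = {g ∈ G : ℓ·g = 0} can be generated by two elements. Let P₁, P₂, P₃ ∈ G, let α₁ be the smallest positive integer such that α₁·P₁ lies in the subgroup of G generated by P₂ and P₃, and define α₂ and α₃ analogously. Then ℓ does not divide gcd(α₁, α₂, α₃), i.e. ℓ fails to divide at least one of α₁, α₂, α₃. -/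
/-!
Let `H` be the subgroup generated by `P₁, P₂, P₃`. If `ℓ` divided every `αᵢ`, then any relation
`∑ cᵢ Pᵢ ∈ ℓ H` would force `ℓ ∣ cᵢ` for all `i`, because `αᵢ` divides every integer `n` with
`n Pᵢ` in the subgroup generated by the other two points. Hence `|H / ℓ H| ≥ ℓ³`. But `H` is finite,
so `|H / ℓ H| = |H[ℓ]| ≤ |G[ℓ]| ≤ ℓ²`, the last bound because `G[ℓ]` is generated by two elements
of order dividing `ℓ`.
-/

open AddSubgroup

theorem Fin.eq_of_intCast_dvd_sub {n : ℕ} {a b : Fin n} (h : (n : ℤ) ∣ (a : ℤ) - b) : a = b := by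
  have hab : |(a : ℤ) - b| < n := by
    rw [abs_lt]
    have := a.isLt
    have := b.isLt
    omega
  have := Int.eq_zero_of_abs_lt_dvd h hab
  omega

section

variable {G : Type*} [AddCommGroup G]

theorem addOrderOf_mk_eq_of_isLeast {P : G} {K : AddSubgroup G} {α : ℕ}
    (hα : IsLeast {n : ℕ | 0 < n ∧ n • P ∈ K} α) : addOrderOf (P : G ⧸ K) = α := by
  obtain ⟨⟨hpos, hmem⟩, hmin⟩ := hα
  rw [addOrderOf_eq_iff hpos]
  refine ⟨(QuotientAddGroup.eq_zero_iff _).2 hmem, fun m hm hm0 hmK => ?_⟩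
  exact (hmin ⟨hm0, (QuotientAddGroup.eq_zero_iff _).1 hmK⟩).not_gt hm

theorem intCast_dvd_of_isLeast_of_zsmul_mem {P : G} {K : AddSubgroup G} {α : ℕ}
    (hα : IsLeast {n : ℕ | 0 < n ∧ n • P ∈ K} α) {n : ℤ} (hn : n • P ∈ K) : (α : ℤ) ∣ n := by
  rw [← addOrderOf_mk_eq_of_isLeast hα, addOrderOf_dvd_iff_zsmul_eq_zero]
  exact (QuotientAddGroup.eq_zero_iff _).2 hn

theorem intCast_dvd_of_add_add_eq_nsmul {ℓ α : ℕ} {P Q R : G}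
    (hα : IsLeast {n : ℕ | 0 < n ∧ n • P ∈ closure ({Q, R} : Set G)} α) (hℓα : ℓ ∣ α)
    {a b c a' b' c' : ℤ} (h : a • P + b • Q + c • R = ℓ • (a' • P + b' • Q + c' • R)) :
    (ℓ : ℤ) ∣ a := by
  have hmem : (a - ℓ * a') • P ∈ closure ({Q, R} : Set G) :=
    mem_closure_pair.2 ⟨ℓ * b' - b, ℓ * c' - c, by linear_combination (norm := module) -h⟩
  have hdvd := (Int.natCast_dvd_natCast.2 hℓα).trans (intCast_dvd_of_isLeast_of_zsmul_mem hα hmem)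
  simpa using hdvd.add (dvd_mul_right _ a')

theorem intCast_dvd_of_sum_eq_nsmul_sum {ℓ α₁ α₂ α₃ : ℕ} {P₁ P₂ P₃ : G}
    (hα₁ : IsLeast {n : ℕ | 0 < n ∧ n • P₁ ∈ closure ({P₂, P₃} : Set G)} α₁)
    (hα₂ : IsLeast {n : ℕ | 0 < n ∧ n • P₂ ∈ closure ({P₁, P₃} : Set G)} α₂)
    (hα₃ : IsLeast {n : ℕ | 0 < n ∧ n • P₃ ∈ closure ({P₁, P₂} : Set G)} α₃)
    (h₁ : ℓ ∣ α₁) (h₂ : ℓ ∣ α₂) (h₃ : ℓ ∣ α₃) {c b : Fin 3 → ℤ}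
    (h : ∑ i, c i • ![P₁, P₂, P₃] i = ℓ • ∑ i, b i • ![P₁, P₂, P₃] i) (i : Fin 3) :
    (ℓ : ℤ) ∣ c i := by
  simp only [Fin.sum_univ_three, Matrix.cons_val_zero, Matrix.cons_val_one,
    Matrix.cons_val_two, Matrix.head_cons, Matrix.tail_cons] at h
  fin_cases i
  · exact intCast_dvd_of_add_add_eq_nsmul hα₁ h₁ h
  · show _ ∣ c 1
    exact intCast_dvd_of_add_add_eq_nsmul hα₂ h₂ (b := c 0) (c := c 2) (a' := b 1) (b' := b 0)
      (c' := b 2) (by linear_combination (norm := module) h)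
  · show _ ∣ c 2
    exact intCast_dvd_of_add_add_eq_nsmul hα₃ h₃ (b := c 0) (c := c 1) (a' := b 2) (b' := b 0)
      (c' := b 1) (by linear_combination (norm := module) h)

theorem ncard_nsmul_eq_zero_le_sq [Finite G] {ℓ : ℕ} (hℓ : 0 < ℓ) {g h : G}
    (hg : ℓ • g = 0) (hh : ℓ • h = 0) (hgen : ∀ x : G, ℓ • x = 0 → ∃ a b : ℤ, x = a • g + b • h) :
    {x : G | ℓ • x = 0}.ncard ≤ ℓ ^ 2 := by
  have hsub : {x : G | ℓ • x = 0} ⊆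
      (fun p : G × G => p.1 + p.2) '' ((zmultiples g : Set G) ×ˢ (zmultiples h : Set G)) := by
    intro x hx
    obtain ⟨a, b, rfl⟩ := hgen x hx
    exact ⟨(a • g, b • h), ⟨zsmul_mem_zmultiples g a, zsmul_mem_zmultiples h b⟩, rfl⟩
  calc {x : G | ℓ • x = 0}.ncard
      ≤ ((zmultiples g : Set G) ×ˢ (zmultiples h : Set G)).ncard :=
        (Set.ncard_le_ncard hsub).trans Set.ncard_image_le
    _ = addOrderOf g * addOrderOf h := by
        rw [Set.ncard_prod, ← Nat.card_coe_set_eq, ← Nat.card_coe_set_eq, SetLike.coe_sort_coe,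
          SetLike.coe_sort_coe, Nat.card_zmultiples, Nat.card_zmultiples]
    _ ≤ ℓ ^ 2 := by
        rw [sq]
        exact Nat.mul_le_mul (addOrderOf_le_of_nsmul_eq_zero hℓ hg)
          (addOrderOf_le_of_nsmul_eq_zero hℓ hh)

theorem card_ker_nsmul_le_ncard [Finite G] {S : Type*} [SetLike S G] [AddSubgroupClass S G] (H : S)
    (ℓ : ℕ) : Nat.card (nsmulAddMonoidHom ℓ : H →+ H).ker ≤ {x : G | ℓ • x = 0}.ncard := by
  rw [← Nat.card_coe_set_eq]
  refine Nat.card_le_card_of_injective (fun y => ⟨(y : H), congrArg Subtype.val y.2⟩) ?_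
  intro y z hyz
  have hval := congrArg Subtype.val hyz
  exact Subtype.ext (Subtype.ext hval)

end

/-- Elements independent modulo `ℓ H` give `ℓ ^ card ι` cosets of `ℓ H`, and for finite `H` the
number of cosets of `ℓ H` is `|H[ℓ]|`. -/
theorem pow_card_le_card_ker_nsmul {H ι : Type*} [AddCommGroup H] [Finite H] [Fintype ι]
    {ℓ : ℕ} (x : ι → H)
    (hx : ∀ c : ι → ℤ, ∑ i, c i • x i ∈ (nsmulAddMonoidHom ℓ : H →+ H).range →
      ∀ i, (ℓ : ℤ) ∣ c i) :
    ℓ ^ Fintype.card ι ≤ Nat.card (nsmulAddMonoidHom ℓ : H →+ H).ker := by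
  set f : H →+ H := nsmulAddMonoidHom ℓ
  have hinj : Function.Injective fun p : (ι → Fin ℓ) × f.range => ∑ i, (p.1 i : ℤ) • x i + p.2 := by
    rintro ⟨a, s⟩ ⟨b, t⟩ hab
    have hdiff : ∑ i, ((a i : ℤ) - b i) • x i ∈ f.range := by
      have hsum : ∑ i, ((a i : ℤ) - b i) • x i = t - s := by
        simp only [sub_smul, Finset.sum_sub_distrib]
        linear_combination (norm := module) hab
      rw [hsum]
      exact sub_mem t.2 s.2
    obtain rfl : a = b := funext fun i => Fin.eq_of_intCast_dvd_sub (hx _ hdiff i)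
    simpa using hab
  have hcard := Nat.card_le_card_of_injective _ hinj
  rw [Nat.card_prod, Nat.card_fun, Nat.card_eq_fintype_card (α := ι),
    Nat.card_eq_fintype_card (α := Fin ℓ), Fintype.card_fin, ← f.ker.card_mul_index,
    AddSubgroup.index_ker] at hcard
  exact Nat.le_of_mul_le_mul_right hcard Nat.card_pos

/-- If the `ℓ`-torsion subgroup of the finite abelian group `G` is generated
by two elements, and `α₁, α₂, α₃` are the minimal positive multipliers sending each `Pᵢ` into
the subgroup generated by the other two points, then `ℓ` does not divide `gcd(α₁, α₂, α₃)`. -/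
theorem stmt_3 (G : Type*) [AddCommGroup G] [Fintype G] (ℓ : ℕ) (hℓ : ℓ.Prime)
    (htors : ∃ g h : G, ℓ • g = 0 ∧ ℓ • h = 0 ∧
        ∀ x : G, ℓ • x = 0 → ∃ a b : ℤ, x = a • g + b • h)
    (P₁ P₂ P₃ : G) (α₁ α₂ α₃ : ℕ)
    (hα₁ : IsLeast {n : ℕ | 0 < n ∧ n • P₁ ∈ AddSubgroup.closure ({P₂, P₃} : Set G)} α₁)
    (hα₂ : IsLeast {n : ℕ | 0 < n ∧ n • P₂ ∈ AddSubgroup.closure ({P₁, P₃} : Set G)} α₂)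
    (hα₃ : IsLeast {n : ℕ | 0 < n ∧ n • P₃ ∈ AddSubgroup.closure ({P₁, P₂} : Set G)} α₃) :
    ¬ ℓ ∣ Nat.gcd α₁ (Nat.gcd α₂ α₃) := by
  rw [Nat.dvd_gcd_iff, Nat.dvd_gcd_iff]
  rintro ⟨h₁, h₂, h₃⟩
  obtain ⟨g, h, hg, hh, hgen⟩ := htors
  set P : Fin 3 → G := ![P₁, P₂, P₃]
  set H := Submodule.span ℤ (Set.range P)
  set f : H →+ H := nsmulAddMonoidHom ℓ
  have hindep : ∀ c : Fin 3 → ℤ,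
      ∑ i, c i • (⟨P i, Submodule.subset_span ⟨i, rfl⟩⟩ : H) ∈ f.range → ∀ i, (ℓ : ℤ) ∣ c i := by
    rintro c ⟨y, hy⟩
    obtain ⟨b, hb⟩ := (Submodule.mem_span_range_iff_exists_fun ℤ).1 y.2
    have hy' := congrArg Subtype.val hy
    simp only [f, nsmulAddMonoidHom_apply, Submodule.coe_smul_of_tower, Submodule.coe_sum] at hy'
    refine intCast_dvd_of_sum_eq_nsmul_sum hα₁ hα₂ hα₃ h₁ h₂ h₃ (b := b) ?_
    rw [← hy', ← hb]
  have hlow : ℓ ^ 3 ≤ Nat.card f.ker := by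
    simpa only [Fintype.card_fin] using pow_card_le_card_ker_nsmul _ hindep
  have hker : Nat.card f.ker ≤ _ := card_ker_nsmul_le_ncard H ℓ
  have hup := ncard_nsmul_eq_zero_le_sq hℓ.pos hg hh hgen
  have := Nat.pow_lt_pow_right hℓ.one_lt (by norm_num : 2 < 3)
  omega
end

section
/- Let G be a finite abelian group, let P₁, P₂, P₃ ∈ G, and let ℓ be a prime number. Let α₁ be the smallest positive integer such that α₁·P₁ lies in the subgroup of G generated by P₂ and P₃, and define α₂ and α₃ analogously. Then ℓ divides all three of α₁, α₂, α₃ if and only if for every triple of integers (x₁, x₂, x₃) with x₁·P₁ + x₂·P₂ + x₃·P₃ = 0, the prime ℓ divides each of x₁, x₂, x₃. -/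
/-!
For each `i`, the integers `x` with `x • Pᵢ` in the subgroup generated by the other two points
are exactly the `i`-th coordinates of the linear relations, and they form the ideal `αᵢ ℤ`.
Hence `ℓ` divides every coordinate of every relation iff it divides each generator `αᵢ`.
-/

section

variable {G : Type*} [AddCommGroup G]

theorem dvd_of_nsmul_mem_of_isLeast {P : G} {H : AddSubgroup G} {α : ℕ}
    (hα : IsLeast {n : ℕ | 0 < n ∧ n • P ∈ H} α) {n : ℕ} (hn : n • P ∈ H) : α ∣ n := by
  have hmod : (n % α) • P ∈ H := by
    have hq : (α * (n / α)) • P ∈ H := by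
      rw [mul_comm, mul_nsmul']
      exact AddSubgroup.nsmul_mem H hα.1.2 _
    rwa [← Nat.div_add_mod n α, add_nsmul, AddSubgroup.add_mem_cancel_left H hq] at hn
  refine Nat.dvd_of_mod_eq_zero (Nat.eq_zero_of_not_pos fun hpos => ?_)
  exact absurd (hα.2 ⟨hpos, hmod⟩) (Nat.mod_lt n hα.1.1).not_ge

theorem natCast_dvd_of_zsmul_mem_of_isLeast {P : G} {H : AddSubgroup G} {α : ℕ}
    (hα : IsLeast {n : ℕ | 0 < n ∧ n • P ∈ H} α) {x : ℤ} (hx : x • P ∈ H) : (α : ℤ) ∣ x := by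
  refine Int.natCast_dvd.2 (dvd_of_nsmul_mem_of_isLeast hα ?_)
  rcases Int.natAbs_eq x with h | h
  · rwa [h, natCast_zsmul] at hx
  · rwa [h, neg_smul, AddSubgroup.neg_mem_iff, natCast_zsmul] at hx

theorem zsmul_mem_closure_pair_of_add_eq_zero {P Q R : G} {x y z : ℤ}
    (h : x • P + y • Q + z • R = 0) : x • P ∈ AddSubgroup.closure ({Q, R} : Set G) :=
  AddSubgroup.mem_closure_pair.2 ⟨-y, -z, by rw [neg_smul, neg_smul]; grind⟩

theorem exists_add_eq_zero_of_nsmul_mem_closure_pair {P Q R : G} {n : ℕ}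
    (h : n • P ∈ AddSubgroup.closure ({Q, R} : Set G)) :
    ∃ y z : ℤ, (n : ℤ) • P + y • Q + z • R = 0 := by
  obtain ⟨a, b, hab⟩ := AddSubgroup.mem_closure_pair.1 h
  exact ⟨-a, -b, by rw [neg_smul, neg_smul, natCast_zsmul, ← hab]; abel⟩

end

theorem stmt_4_general (G : Type*) [AddCommGroup G]
    (P₁ P₂ P₃ : G) (ℓ : ℕ) (α₁ α₂ α₃ : ℕ)
    (hα₁ : IsLeast {n : ℕ | 0 < n ∧ n • P₁ ∈ AddSubgroup.closure ({P₂, P₃} : Set G)} α₁)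
    (hα₂ : IsLeast {n : ℕ | 0 < n ∧ n • P₂ ∈ AddSubgroup.closure ({P₁, P₃} : Set G)} α₂)
    (hα₃ : IsLeast {n : ℕ | 0 < n ∧ n • P₃ ∈ AddSubgroup.closure ({P₁, P₂} : Set G)} α₃) :
    (ℓ ∣ α₁ ∧ ℓ ∣ α₂ ∧ ℓ ∣ α₃) ↔
      ∀ x₁ x₂ x₃ : ℤ, x₁ • P₁ + x₂ • P₂ + x₃ • P₃ = 0 →
        (ℓ : ℤ) ∣ x₁ ∧ (ℓ : ℤ) ∣ x₂ ∧ (ℓ : ℤ) ∣ x₃ := by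
  constructor
  · rintro ⟨h₁, h₂, h₃⟩ x₁ x₂ x₃ hrel
    have hrel₂ : x₂ • P₂ + x₁ • P₁ + x₃ • P₃ = 0 := by rw [← hrel]; abel
    have hrel₃ : x₃ • P₃ + x₁ • P₁ + x₂ • P₂ = 0 := by rw [← hrel]; abel
    exact ⟨(Int.natCast_dvd_natCast.2 h₁).trans <| natCast_dvd_of_zsmul_mem_of_isLeast hα₁ <|
        zsmul_mem_closure_pair_of_add_eq_zero hrel,
      (Int.natCast_dvd_natCast.2 h₂).trans <| natCast_dvd_of_zsmul_mem_of_isLeast hα₂ <|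
        zsmul_mem_closure_pair_of_add_eq_zero hrel₂,
      (Int.natCast_dvd_natCast.2 h₃).trans <| natCast_dvd_of_zsmul_mem_of_isLeast hα₃ <|
        zsmul_mem_closure_pair_of_add_eq_zero hrel₃⟩
  · intro h
    obtain ⟨y₁, z₁, hrel₁⟩ := exists_add_eq_zero_of_nsmul_mem_closure_pair hα₁.1.2
    obtain ⟨y₂, z₂, hrel₂⟩ := exists_add_eq_zero_of_nsmul_mem_closure_pair hα₂.1.2
    obtain ⟨y₃, z₃, hrel₃⟩ := exists_add_eq_zero_of_nsmul_mem_closure_pair hα₃.1.2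
    exact ⟨Int.natCast_dvd_natCast.1 (h _ _ _ hrel₁).1,
      Int.natCast_dvd_natCast.1 (h y₂ α₂ z₂ (by rw [← hrel₂]; abel)).2.1,
      Int.natCast_dvd_natCast.1 (h y₃ z₃ α₃ (by rw [← hrel₃]; abel)).2.2⟩

/-- With `α₁, α₂, α₃` the minimal positive multipliers, the prime `ℓ` divides
all three of them iff `ℓ` divides every coefficient of every integer linear relation among
`P₁, P₂, P₃`. -/
theorem stmt_4 (G : Type*) [AddCommGroup G] [Fintype G]
    (P₁ P₂ P₃ : G) (ℓ : ℕ) (hℓ : ℓ.Prime) (α₁ α₂ α₃ : ℕ)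
    (hα₁ : IsLeast {n : ℕ | 0 < n ∧ n • P₁ ∈ AddSubgroup.closure ({P₂, P₃} : Set G)} α₁)
    (hα₂ : IsLeast {n : ℕ | 0 < n ∧ n • P₂ ∈ AddSubgroup.closure ({P₁, P₃} : Set G)} α₂)
    (hα₃ : IsLeast {n : ℕ | 0 < n ∧ n • P₃ ∈ AddSubgroup.closure ({P₁, P₂} : Set G)} α₃) :
    (ℓ ∣ α₁ ∧ ℓ ∣ α₂ ∧ ℓ ∣ α₃) ↔
      ∀ x₁ x₂ x₃ : ℤ, x₁ • P₁ + x₂ • P₂ + x₃ • P₃ = 0 →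
        (ℓ : ℤ) ∣ x₁ ∧ (ℓ : ℤ) ∣ x₂ ∧ (ℓ : ℤ) ∣ x₃ :=
  stmt_4_general G P₁ P₂ P₃ ℓ α₁ α₂ α₃ hα₁ hα₂ hα₃
end

section
/- Let G be a finite abelian group, let P₁, P₂, P₃ ∈ G, and let ℓ be a prime number. Suppose that every element T of the subgroup generated by P₁, P₂, P₃ satisfying ℓ·T = 0 lies in the subgroup generated by P₂ and P₃. Then there exists a triple of integers (x₁, x₂, x₃) with x₁·P₁ + x₂·P₂ + x₃·P₃ = 0 such that ℓ does not divide at least one of x₁, x₂, x₃. -/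
/-!
Suppose every relation `x₁ • P₁ + x₂ • P₂ + x₃ • P₃ = 0` had all coefficients divisible by `ℓ`.
Writing such a relation as `ℓ • (y₁ • P₁ + y₂ • P₂ + y₃ • P₃) = 0`, the element in brackets is
`ℓ`-torsion, hence equal to some `a • P₂ + b • P₃`, and subtracting gives a new relation with
first coefficient `y₁ = x₁ / ℓ`. Iterating, every first coefficient of a relation is divisible by
all powers of `ℓ`; but `|G| • P₁ = 0` is a relation with nonzero first coefficient.
-/

section Relations

variable {G : Type*} [AddCommGroup G] {P₁ P₂ P₃ : G} {ℓ : ℕ}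

lemma zsmul_add_zsmul_add_zsmul_mem_closure (P₁ P₂ P₃ : G) (y₁ y₂ y₃ : ℤ) :
    y₁ • P₁ + y₂ • P₂ + y₃ • P₃ ∈ AddSubgroup.closure ({P₁, P₂, P₃} : Set G) := by
  have hP : ∀ P ∈ ({P₁, P₂, P₃} : Set G), P ∈ AddSubgroup.closure ({P₁, P₂, P₃} : Set G) :=
    fun _ hP => AddSubgroup.subset_closure hP
  refine add_mem (add_mem ?_ ?_) ?_ <;> exact zsmul_mem (hP _ (by simp)) _

lemma exists_relation_of_relation_mul_left
    (hT : ∀ T ∈ AddSubgroup.closure ({P₁, P₂, P₃} : Set G),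
      ℓ • T = 0 → T ∈ AddSubgroup.closure ({P₂, P₃} : Set G))
    {y₁ y₂ y₃ : ℤ} (hy : (ℓ * y₁) • P₁ + (ℓ * y₂) • P₂ + (ℓ * y₃) • P₃ = 0) :
    ∃ z₂ z₃ : ℤ, y₁ • P₁ + z₂ • P₂ + z₃ • P₃ = 0 := by
  set T := y₁ • P₁ + y₂ • P₂ + y₃ • P₃ with hT_def
  have hℓT : ℓ • T = 0 := by
    rw [← natCast_zsmul, hT_def, smul_add, smul_add, smul_smul, smul_smul, smul_smul, hy]
  obtain ⟨a, b, hab⟩ := AddSubgroup.mem_closure_pair.mp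
    (hT T (zsmul_add_zsmul_add_zsmul_mem_closure P₁ P₂ P₃ y₁ y₂ y₃) hℓT)
  refine ⟨y₂ - a, y₃ - b, ?_⟩
  calc y₁ • P₁ + (y₂ - a) • P₂ + (y₃ - b) • P₃ = T - (a • P₂ + b • P₃) := by
        rw [hT_def, sub_smul, sub_smul]; abel
    _ = 0 := by rw [hab, sub_self]

lemma pow_dvd_of_forall_relation_dvd
    (hT : ∀ T ∈ AddSubgroup.closure ({P₁, P₂, P₃} : Set G),
      ℓ • T = 0 → T ∈ AddSubgroup.closure ({P₂, P₃} : Set G))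
    (hdvd : ∀ x₁ x₂ x₃ : ℤ, x₁ • P₁ + x₂ • P₂ + x₃ • P₃ = 0 →
      (ℓ : ℤ) ∣ x₁ ∧ (ℓ : ℤ) ∣ x₂ ∧ (ℓ : ℤ) ∣ x₃) (k : ℕ) :
    ∀ {x₁ x₂ x₃ : ℤ}, x₁ • P₁ + x₂ • P₂ + x₃ • P₃ = 0 → (ℓ : ℤ) ^ k ∣ x₁ := by
  induction k with
  | zero => exact fun _ => one_dvd _
  | succ k ih =>
    intro x₁ x₂ x₃ hx
    obtain ⟨⟨y₁, rfl⟩, ⟨y₂, rfl⟩, ⟨y₃, rfl⟩⟩ := hdvd x₁ x₂ x₃ hx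
    obtain ⟨z₂, z₃, hz⟩ := exists_relation_of_relation_mul_left hT hx
    rw [pow_succ']
    exact mul_dvd_mul_left _ (ih hz)

end Relations

/-- If every `ℓ`-torsion element of the subgroup generated by `P₁, P₂, P₃`
already lies in the subgroup generated by `P₂, P₃`, then there is an integer linear relation
among `P₁, P₂, P₃` not all of whose coefficients are divisible by `ℓ`. -/
theorem stmt_5 (G : Type*) [AddCommGroup G] [Fintype G]
    (P₁ P₂ P₃ : G) (ℓ : ℕ) (hℓ : ℓ.Prime)
    (hT : ∀ T ∈ AddSubgroup.closure ({P₁, P₂, P₃} : Set G),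
      ℓ • T = 0 → T ∈ AddSubgroup.closure ({P₂, P₃} : Set G)) :
    ∃ x₁ x₂ x₃ : ℤ, x₁ • P₁ + x₂ • P₂ + x₃ • P₃ = 0 ∧
      ¬ ((ℓ : ℤ) ∣ x₁ ∧ (ℓ : ℤ) ∣ x₂ ∧ (ℓ : ℤ) ∣ x₃) := by
  by_contra! hdvd
  have hcard : (Fintype.card G : ℤ) • P₁ + (0 : ℤ) • P₂ + (0 : ℤ) • P₃ = 0 := by
    simp [card_nsmul_eq_zero]
  obtain ⟨k, hk⟩ : FiniteMultiplicity (ℓ : ℤ) (Fintype.card G) :=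
    Int.finiteMultiplicity_iff.mpr ⟨by simp [hℓ.ne_one], by simp [Fintype.card_ne_zero]⟩
  exact hk (pow_dvd_of_forall_relation_dvd hT hdvd (k + 1) hcard)
end

section
/- Let A be an abelian group and let P₁, P₂, P₃ ∈ A. Suppose there exist integers α₁, α₂, α₃ and integers m₁₂, m₁₃, m₂₁, m₂₃, m₃₁, m₃₂ such that α₁·P₁ + m₁₂·P₂ + m₁₃·P₃ = 0, m₂₁·P₁ + α₂·P₂ + m₂₃·P₃ = 0, m₃₁·P₁ + m₃₂·P₂ + α₃·P₃ = 0, and gcd(α₁, α₂, α₃) = 1. Then there exists a 3×3 integer matrix M with trace zero such that for each i ∈ {1,2,3} one has Pᵢ = Mᵢ₁·P₁ + Mᵢ₂·P₂ + Mᵢ₃·P₃. -/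
/-!
Bézout gives integers `aᵢ` with `Σ αᵢ aᵢ = 3`. Subtracting `aᵢ` times the `i`-th relation from
`Pᵢ` shows that `M = 1 - diag(a) · R` fixes `(P₁, P₂, P₃)`, where `R` is the relation matrix, and
`trace M = 3 - Σ aᵢ αᵢ = 0`.
-/

open Matrix

theorem Int.exists_mul_add_mul_add_mul_eq_one {a b c : ℤ} (h : Int.gcd a (Int.gcd b c) = 1) :
    ∃ x y z : ℤ, a * x + b * y + c * z = 1 := by
  obtain ⟨u, v, huv⟩ := Int.isCoprime_iff_gcd_eq_one.mpr h
  refine ⟨u, v * Int.gcdA b c, v * Int.gcdB b c, ?_⟩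
  rw [Int.gcd_eq_gcd_ab b c] at huv
  linear_combination huv

section RelationMatrix

variable {ι A : Type*} [Fintype ι] [DecidableEq ι] [AddCommGroup A]

theorem sum_one_sub_diagonal_mul_smul {R : Matrix ι ι ℤ} {P : ι → A}
    (hR : ∀ i, ∑ j, R i j • P j = 0) (a : ι → ℤ) (i : ι) :
    ∑ j, (1 - diagonal a * R) i j • P j = P i := by
  simp only [Matrix.sub_apply, diagonal_mul, sub_smul, Finset.sum_sub_distrib, mul_smul,
    ← Finset.smul_sum, hR, smul_zero, sub_zero, one_apply, ite_smul, one_smul, zero_smul,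
    Finset.sum_ite_eq, Finset.mem_univ, if_true]

theorem trace_one_sub_diagonal_mul (R : Matrix ι ι ℤ) (a : ι → ℤ) :
    trace (1 - diagonal a * R) = Fintype.card ι - ∑ i, a i * R i i := by
  simp [trace, diagonal_mul]

end RelationMatrix

/-- Given three relations with diagonal coefficients `α₁, α₂, α₃` whose gcd is
one, there is a trace-zero integer matrix `M` fixing the column vector `(P₁, P₂, P₃)`. -/
theorem stmt_6 (A : Type*) [AddCommGroup A] (P₁ P₂ P₃ : A)
    (α₁ α₂ α₃ m₁₂ m₁₃ m₂₁ m₂₃ m₃₁ m₃₂ : ℤ)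
    (h1 : α₁ • P₁ + m₁₂ • P₂ + m₁₃ • P₃ = 0)
    (h2 : m₂₁ • P₁ + α₂ • P₂ + m₂₃ • P₃ = 0)
    (h3 : m₃₁ • P₁ + m₃₂ • P₂ + α₃ • P₃ = 0)
    (hgcd : Int.gcd α₁ (Int.gcd α₂ α₃) = 1) :
    ∃ M : Matrix (Fin 3) (Fin 3) ℤ, Matrix.trace M = 0 ∧
      P₁ = M 0 0 • P₁ + M 0 1 • P₂ + M 0 2 • P₃ ∧
      P₂ = M 1 0 • P₁ + M 1 1 • P₂ + M 1 2 • P₃ ∧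
      P₃ = M 2 0 • P₁ + M 2 1 • P₂ + M 2 2 • P₃ := by
  obtain ⟨x, y, z, hxyz⟩ := Int.exists_mul_add_mul_add_mul_eq_one hgcd
  set R : Matrix (Fin 3) (Fin 3) ℤ := !![α₁, m₁₂, m₁₃; m₂₁, α₂, m₂₃; m₃₁, m₃₂, α₃]
  set P : Fin 3 → A := ![P₁, P₂, P₃]
  have hR : ∀ i, ∑ j, R i j • P j = 0 := by
    intro i; fin_cases i <;> simpa [Fin.sum_univ_three, R, P]
  have hP := sum_one_sub_diagonal_mul_smul hR ![3 * x, 3 * y, 3 * z]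
  refine ⟨1 - diagonal ![3 * x, 3 * y, 3 * z] * R, ?_, ?_, ?_, ?_⟩
  · rw [trace_one_sub_diagonal_mul]
    simp only [Fintype.card_fin, Nat.cast_ofNat, Fin.sum_univ_three, Fin.isValue, of_apply,
      cons_val', cons_val_fin_one, cons_val_zero, cons_val_one, cons_val, R]
    linear_combination -3 * hxyz
  · simpa [Fin.sum_univ_three, P] using (hP 0).symm
  · simpa [Fin.sum_univ_three, P] using (hP 1).symm
  · simpa [Fin.sum_univ_three, P] using (hP 2).symm
end
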